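/- arXiv:2407.04032 — 4 statements merged into one kernel-verified Lean document; each statement's English description precedes it below -/
import Mathlib

section
/- Let γ ∈ C¹(ℝ/ℤ, ℝ²) be an arclength-parametrized immersion with finitely many self-intersections, all transverse double points, and let Λ(γ) > 0 denote the minimal intrinsic distance between any two distinct self-intersection parameters. If (u,v) is a self-intersection pair (u < v, γ(u) = γ(v)), δ ≤ Λ(γ)/4, and τ ∈ [0,1/2] satisfies |γ'(s+w) - γ'(s)| ≤ 1/2 for all s and |w| ≤ τ, then |u - v|_{ℝ/ℤ} - 2δ > τ. -/
open Set

/-- Periodic distance on `ℝ/ℤ`. -/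
noncomputable def pdist (x y : ℝ) : ℝ := ⨅ k : ℤ, |x - y + k|

/-!
Shifting `u` by an integer, the curve closes up over a parameter interval `[a, a + m]` of
length `m = pdist u v`. If the claim failed, `δ ≤ m / 4` would force `m / 2 ≤ τ`, so on that
interval the unit tangent stays within `1/2` of its value at the midpoint. The mean value
inequality then makes the chord `γ (a + m) - γ a` at least `m / 2` long, whereas it vanishes.
-/

theorem pdist_eq_abs_sub_round (x y : ℝ) : pdist x y = |x - y - round (x - y)| := by
  have hbdd : BddBelow (range fun k : ℤ => |x - y + k|) :=
    ⟨0, by rintro _ ⟨k, rfl⟩; positivity⟩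
  unfold pdist
  refine le_antisymm ?_ (le_ciInf fun k => ?_)
  · simpa [sub_eq_add_neg] using ciInf_le hbdd (-round (x - y))
  · simpa [sub_eq_add_neg] using round_le (x - y) (-k)

theorem Function.Periodic.exists_add_pdist_eq {α : Type*} {f : ℝ → α}
    (hf : Function.Periodic f 1) {x y : ℝ} (h : f x = f y) :
    ∃ a, f (a + pdist x y) = f a := by
  set x' := x - round (x - y)
  have hx' : f x' = f y := by simpa [x'] using (hf.sub_int_mul_eq (round (x - y))).trans h
  have hdist : pdist x y = |x' - y| := by rw [pdist_eq_abs_sub_round, sub_right_comm]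
  rcases abs_cases (x' - y) with ⟨habs, -⟩ | ⟨habs, -⟩
  · exact ⟨y, by rw [hdist, habs, add_sub_cancel, hx']⟩
  · exact ⟨x', by rw [hdist, habs, neg_sub, add_sub_cancel, hx']⟩

section Chord

variable {E : Type*} [NormedAddCommGroup E] [NormedSpace ℝ E] {f : ℝ → E} {a b ε : ℝ}

theorem norm_sub_sub_smul_le_of_norm_deriv_sub_le (D : E)
    (hf : ∀ t ∈ Icc a b, DifferentiableAt ℝ f t) (hab : a ≤ b)
    (hD : ∀ t ∈ Icc a b, ‖deriv f t - D‖ ≤ ε) :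
    ‖f b - f a - (b - a) • D‖ ≤ ε * (b - a) := by
  -- mean value inequality for `t ↦ f t - t • D`
  have hderiv : ∀ t ∈ Icc a b,
      HasDerivWithinAt (fun s => f s - s • D) (deriv f t - D) (Icc a b) t := fun t ht => by
    have h := (hf t ht).hasDerivAt.sub ((hasDerivAt_id t).smul_const D)
    rw [one_smul] at h
    exact h.hasDerivWithinAt
  have hmvt := norm_image_sub_le_of_norm_deriv_le_segment' hderiv
    (fun t ht => hD t (Ico_subset_Icc_self ht)) b (right_mem_Icc.2 hab)
  convert hmvt using 2
  rw [sub_smul]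
  abel

theorem sub_mul_le_norm_sub_of_norm_deriv_sub_le (D : E)
    (hf : ∀ t ∈ Icc a b, DifferentiableAt ℝ f t) (hab : a ≤ b)
    (hD : ∀ t ∈ Icc a b, ‖deriv f t - D‖ ≤ ε) :
    (‖D‖ - ε) * (b - a) ≤ ‖f b - f a‖ := by
  have hclose := norm_sub_sub_smul_le_of_norm_deriv_sub_le D hf hab hD
  have htri := norm_sub_norm_le ((b - a) • D) (f b - f a)
  rw [norm_sub_rev _ (f b - f a), norm_smul, Real.norm_of_nonneg (sub_nonneg.2 hab)] at htri
  linarith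

end Chord

theorem stmt2_general (γ : ℝ → EuclideanSpace ℝ (Fin 2))
    (hper : ∀ t, γ (t + 1) = γ t) (hC1 : ContDiff ℝ 1 γ)
    (harc : ∀ t, ‖deriv γ t‖ = 1)
    (Λ : ℝ) (hΛpos : 0 < Λ)
    (u v : ℝ) (hsi : γ u = γ v)
    (hsep : Λ ≤ pdist u v)
    (δ τ : ℝ) (hδΛ : δ ≤ Λ / 4)
    (hosc : ∀ s w : ℝ, |w| ≤ τ → ‖deriv γ (s + w) - deriv γ s‖ ≤ 1/2) :
    pdist u v - 2 * δ > τ := by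
  set m := pdist u v
  obtain ⟨a, hloop⟩ := Function.Periodic.exists_add_pdist_eq hper hsi
  by_contra! hτm
  have hm2τ : m / 2 ≤ τ := by linarith
  have hnear : ∀ t ∈ Icc a (a + m), ‖deriv γ t - deriv γ (a + m / 2)‖ ≤ 1 / 2 := by
    intro t ht
    have hw : |t - (a + m / 2)| ≤ τ := abs_le.2 ⟨by linarith [ht.1], by linarith [ht.2]⟩
    simpa using hosc (a + m / 2) (t - (a + m / 2)) hw
  have hchord := sub_mul_le_norm_sub_of_norm_deriv_sub_le (deriv γ (a + m / 2))
    (fun t _ => hC1.differentiable one_ne_zero t) (by linarith : a ≤ a + m) hnear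
  rw [hloop, sub_self, norm_zero, harc] at hchord
  linarith

theorem stmt2 (γ : ℝ → EuclideanSpace ℝ (Fin 2))
    (hper : ∀ t, γ (t + 1) = γ t) (hC1 : ContDiff ℝ 1 γ)
    (harc : ∀ t, ‖deriv γ t‖ = 1)
    (Λ : ℝ) (hΛpos : 0 < Λ)
    (u v : ℝ) (huv : u < v) (hsi : γ u = γ v)
    (hsep : Λ ≤ pdist u v)
    (δ τ : ℝ) (hδ : 0 < δ) (hδΛ : δ ≤ Λ / 4)
    (hτ : τ ∈ Icc (0 : ℝ) (1/2))
    (hosc : ∀ s w : ℝ, |w| ≤ τ → ‖deriv γ (s + w) - deriv γ s‖ ≤ 1/2) :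
    pdist u v - 2 * δ > τ :=
  stmt2_general γ hper hC1 harc Λ hΛpos u v hsi hsep δ τ hδΛ hosc
end

section
/- Let q > 2 and let γ ∈ W^{2-1/q, q}(ℝ/ℤ, ℝ²) be an arclength-parametrized curve with finitely many transverse double-point self-intersections. Suppose there is a constant c > 0 with |x-y|_{ℝ/ℤ} ≤ c |γ(x) - γ(y)| for all (x,y) outside the truncated region Y_δ(γ). Then TP_{q,δ}(γ) ≤ (2c²)^q · (1/q) · [γ']^q_{1-1/q, q} < ∞, where [γ']_{1-1/q,q} is the Gagliardo seminorm of γ' of order 1-1/q in L^q. -/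
open MeasureTheory Set
open scoped ENNReal

/-- The affine tangent line of the curve `γ` at the parameter `x`. -/
def tangentLine (γ : ℝ → EuclideanSpace ℝ (Fin 2)) (x : ℝ) : Set (EuclideanSpace ℝ (Fin 2)) :=
  {p | ∃ c : ℝ, p = γ x + c • deriv γ x}

/-- Truncated tangent-point energy of an arclength parametrized curve, written in
`(x,w)`-coordinates (`y = x + w`), over a truncated parameter domain `D`. -/
noncomputable def tpE (q : ℝ) (γ : ℝ → EuclideanSpace ℝ (Fin 2)) (D : Set (ℝ × ℝ)) : ℝ≥0∞ :=
  ∫⁻ p in D, ENNReal.ofReal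
    ((2 * Metric.infDist (γ (p.1 + p.2)) (tangentLine γ p.1) /
        ‖γ (p.1 + p.2) - γ p.1‖ ^ 2) ^ q)

/-- Gagliardo seminorm `[f]^q_{1-1/q,q}` (to the `q`-th power) of a 1-periodic function. -/
noncomputable def gagliardo (q : ℝ) (f : ℝ → EuclideanSpace ℝ (Fin 2)) : ℝ≥0∞ :=
  ∫⁻ x in Ioc (0 : ℝ) 1, ∫⁻ w in Icc (-(1/2) : ℝ) (1/2),
    ENNReal.ofReal (‖f (x + w) - f x‖ ^ q / |w| ^ q)

/-!
The distance from `γ (x + w)` to the tangent line at `γ x` is at most the Taylor remainder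
`‖γ (x + w) - γ x - w γ'(x)‖`, so on `D` the bound `|w| ≤ c ‖γ (x + w) - γ x‖` dominates the
tangent-point integrand by `(2c²)^q ‖γ (x + w) - γ x - w γ'(x)‖^q / |w|^(2q)`. Writing the remainder
as `∫₀^w (γ'(x + s) - γ'(x)) ds`, Hölder's inequality bounds this by
`|w|^(-q-1) ∫₀^w ‖γ'(x + s) - γ'(x)‖^q ds`, and Hardy's inequality
`∫₀^a w^(-q-1) ∫₀^w F ≤ (1/q) ∫₀^a s^(-q) F(s)` (Tonelli and `∫_s^∞ w^(-q-1) dw = s^(-q)/q`)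
turns the integral in `w` into the Gagliardo integrand of `γ'`.
-/

lemma lintegral_Ioi_rpow_neg_sub_one {q s : ℝ} (hq : 0 < q) (hs : 0 < s) :
    ∫⁻ w in Ioi s, ENNReal.ofReal w ^ (-q - 1)
      = ENNReal.ofReal (1 / q) * ENNReal.ofReal s ^ (-q) := by
  have hint : IntegrableOn (fun w : ℝ => w ^ (-q - 1)) (Ioi s) :=
    integrableOn_Ioi_rpow_of_lt (by linarith) hs
  have hnonneg : ∀ᵐ w ∂volume.restrict (Ioi s), 0 ≤ w ^ (-q - 1) :=
    ae_restrict_of_forall_mem measurableSet_Ioi fun w hw => Real.rpow_nonneg (hs.trans hw).le _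
  calc ∫⁻ w in Ioi s, ENNReal.ofReal w ^ (-q - 1)
      = ∫⁻ w in Ioi s, ENNReal.ofReal (w ^ (-q - 1)) :=
        setLIntegral_congr_fun measurableSet_Ioi fun w hw =>
          ENNReal.ofReal_rpow_of_pos (hs.trans hw)
    _ = ENNReal.ofReal (∫ w in Ioi s, w ^ (-q - 1)) :=
        (ofReal_integral_eq_lintegral_ofReal hint hnonneg).symm
    _ = ENNReal.ofReal (1 / q) * ENNReal.ofReal s ^ (-q) := by
        rw [integral_Ioi_rpow_of_lt (by linarith) hs, sub_add_cancel, ENNReal.ofReal_rpow_of_pos hs,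
          ← ENNReal.ofReal_mul (by positivity), neg_div_neg_eq, one_div_mul_eq_div]

lemma hardy_lintegral_Ioc_le {q a : ℝ} (hq : 0 < q) {F : ℝ → ℝ≥0∞} (hF : Measurable F) :
    ∫⁻ w in Ioc 0 a, ENNReal.ofReal w ^ (-q - 1) * ∫⁻ s in Ioc 0 w, F s
      ≤ ENNReal.ofReal (1 / q) * ∫⁻ s in Ioc 0 a, ENNReal.ofReal s ^ (-q) * F s := by
  set Φ : ℝ → ℝ → ℝ≥0∞ := fun w s =>
    {p : ℝ × ℝ | p.2 ≤ p.1}.indicator (fun p => ENNReal.ofReal p.1 ^ (-q - 1) * F p.2) (w, s)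
  have hΦ : Measurable (Function.uncurry Φ) :=
    (by fun_prop : Measurable fun p : ℝ × ℝ => ENNReal.ofReal p.1 ^ (-q - 1) * F p.2).indicator
      (measurableSet_le measurable_snd measurable_fst)
  have hslice_w : ∀ w ∈ Ioc 0 a,
      ENNReal.ofReal w ^ (-q - 1) * ∫⁻ s in Ioc 0 w, F s = ∫⁻ s in Ioc 0 a, Φ w s := by
    intro w hw
    change _ = ∫⁻ s in Ioc 0 a, (Iic w).indicator (fun s => ENNReal.ofReal w ^ (-q - 1) * F s) s
    rw [lintegral_indicator measurableSet_Iic, Measure.restrict_restrict measurableSet_Iic,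
      Iic_inter_Ioc_of_le hw.2, lintegral_const_mul _ hF]
  have hslice_s : ∀ s ∈ Ioc 0 a,
      ∫⁻ w in Ioc 0 a, Φ w s ≤ ENNReal.ofReal (1 / q) * (ENNReal.ofReal s ^ (-q) * F s) := by
    intro s hs
    change ∫⁻ w in Ioc 0 a, (Ici s).indicator (fun w => ENNReal.ofReal w ^ (-q - 1) * F s) w ≤ _
    rw [lintegral_indicator measurableSet_Ici, Measure.restrict_restrict measurableSet_Ici,
      lintegral_mul_const _ (by fun_prop), ← mul_assoc,
      ← lintegral_Ioi_rpow_neg_sub_one hq hs.1, Measure.restrict_congr_set Ioi_ae_eq_Ici]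
    gcongr
    exact inter_subset_left
  calc ∫⁻ w in Ioc 0 a, ENNReal.ofReal w ^ (-q - 1) * ∫⁻ s in Ioc 0 w, F s
      = ∫⁻ w in Ioc 0 a, ∫⁻ s in Ioc 0 a, Φ w s := setLIntegral_congr_fun measurableSet_Ioc hslice_w
    _ = ∫⁻ s in Ioc 0 a, ∫⁻ w in Ioc 0 a, Φ w s := lintegral_lintegral_swap hΦ.aemeasurable
    _ ≤ ∫⁻ s in Ioc 0 a, ENNReal.ofReal (1 / q) * (ENNReal.ofReal s ^ (-q) * F s) :=
        setLIntegral_mono' measurableSet_Ioc hslice_s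
    _ = _ := lintegral_const_mul' _ _ ENNReal.ofReal_ne_top

lemma setLIntegral_comp_neg {G : Type*} [MeasurableSpace G] [InvolutiveNeg G] [MeasurableNeg G]
    (μ : Measure G) [μ.IsNegInvariant] (f : G → ℝ≥0∞) (s : Set G) :
    ∫⁻ x in s, f (-x) ∂μ = ∫⁻ x in -s, f x ∂μ := by
  simpa only [neg_preimage, neg_neg] using
    (Measure.measurePreserving_neg μ).setLIntegral_comp_preimage_emb
      (MeasurableEquiv.neg G).measurableEmbedding f (-s)

lemma lintegral_Icc_neg_eq {a : ℝ} (ha : 0 ≤ a) {f : ℝ → ℝ≥0∞} (hf : Measurable f) :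
    ∫⁻ x in Icc (-a) a, f x = ∫⁻ x in Ioc 0 a, (f x + f (-x)) := by
  have hneg : ∫⁻ x in Ioc 0 a, f (-x) = ∫⁻ x in Icc (-a) 0, f x := by
    rw [setLIntegral_comp_neg, neg_Ioc, neg_zero, Measure.restrict_congr_set Ico_ae_eq_Icc]
  have hdisj : Disjoint (Icc (-a) 0) (Ioc 0 a) :=
    (Iic_disjoint_Ioc le_rfl).mono_left Icc_subset_Iic_self
  rw [lintegral_add_left hf, hneg, ← Icc_union_Ioc_eq_Icc (neg_nonpos.2 ha) ha,
    lintegral_union measurableSet_Ioc hdisj, add_comm]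

lemma measurable_lintegral_uIoc {F : ℝ → ℝ≥0∞} (hF : Measurable F) :
    Measurable fun w => ∫⁻ s in uIoc 0 w, F s := by
  have hset : MeasurableSet {p : ℝ × ℝ | p.2 ∈ uIoc 0 p.1} :=
    show MeasurableSet ({p : ℝ × ℝ | 0 ⊓ p.1 < p.2} ∩ {p | p.2 ≤ 0 ⊔ p.1}) from
      (measurableSet_lt (by fun_prop) (by fun_prop)).inter
        (measurableSet_le (by fun_prop) (by fun_prop))
  simp_rw [← lintegral_indicator measurableSet_uIoc]
  exact ((hF.comp measurable_snd).indicator hset).lintegral_prod_right'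

lemma hardy_lintegral_Icc_le {q a : ℝ} (hq : 0 < q) (ha : 0 ≤ a) {F : ℝ → ℝ≥0∞}
    (hF : Measurable F) :
    ∫⁻ w in Icc (-a) a, ENNReal.ofReal |w| ^ (-q - 1) * ∫⁻ s in uIoc 0 w, F s
      ≤ ENNReal.ofReal (1 / q) * ∫⁻ s in Icc (-a) a, ENNReal.ofReal |s| ^ (-q) * F s := by
  have hfold : ∀ w ∈ Ioc 0 a,
      (ENNReal.ofReal |w| ^ (-q - 1) * ∫⁻ s in uIoc 0 w, F s)
        + ENNReal.ofReal |-w| ^ (-q - 1) * ∫⁻ s in uIoc 0 (-w), F s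
      = ENNReal.ofReal w ^ (-q - 1) * ∫⁻ s in Ioc 0 w, (F s + F (-s)) := by
    intro w hw
    rw [abs_neg, abs_of_pos hw.1, uIoc_of_le hw.1.le, uIoc_of_ge (neg_nonpos.2 hw.1.le),
      lintegral_add_left hF, mul_add, setLIntegral_comp_neg, neg_Ioc, neg_zero,
      Measure.restrict_congr_set Ico_ae_eq_Ioc]
  calc ∫⁻ w in Icc (-a) a, ENNReal.ofReal |w| ^ (-q - 1) * ∫⁻ s in uIoc 0 w, F s
      = ∫⁻ w in Ioc 0 a, ((ENNReal.ofReal |w| ^ (-q - 1) * ∫⁻ s in uIoc 0 w, F s)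
          + ENNReal.ofReal |-w| ^ (-q - 1) * ∫⁻ s in uIoc 0 (-w), F s) :=
        lintegral_Icc_neg_eq ha (by have := measurable_lintegral_uIoc hF; fun_prop)
    _ = ∫⁻ w in Ioc 0 a, ENNReal.ofReal w ^ (-q - 1) * ∫⁻ s in Ioc 0 w, (F s + F (-s)) :=
        setLIntegral_congr_fun measurableSet_Ioc hfold
    _ ≤ ENNReal.ofReal (1 / q) * ∫⁻ s in Ioc 0 a, ENNReal.ofReal s ^ (-q) * (F s + F (-s)) :=
        hardy_lintegral_Ioc_le hq (hF.add (hF.comp measurable_neg))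
    _ = ENNReal.ofReal (1 / q) * ∫⁻ s in Ioc 0 a,
          (ENNReal.ofReal |s| ^ (-q) * F s + ENNReal.ofReal |-s| ^ (-q) * F (-s)) := by
        refine congrArg _ (setLIntegral_congr_fun measurableSet_Ioc fun s hs => ?_)
        rw [abs_neg, abs_of_pos hs.1, mul_add]
    _ = ENNReal.ofReal (1 / q) * ∫⁻ s in Icc (-a) a, ENNReal.ofReal |s| ^ (-q) * F s := by
        rw [lintegral_Icc_neg_eq ha (by fun_prop)]

lemma lintegral_rpow_le_measure_univ_mul {α : Type*} [MeasurableSpace α] (μ : Measure α) {q : ℝ}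
    (hq : 1 < q) {f : α → ℝ≥0∞} (hf : AEMeasurable f μ) :
    (∫⁻ a, f a ∂μ) ^ q ≤ μ univ ^ (q - 1) * ∫⁻ a, f a ^ q ∂μ := by
  have hq0 : 0 < q := by linarith
  have hpq : q.HolderConjugate (q / (q - 1)) := (Real.holderConjugate_iff_eq_conjExponent hq).2 rfl
  have holder := ENNReal.lintegral_mul_le_Lp_mul_Lq μ hpq hf aemeasurable_const (g := 1)
  simp only [Pi.mul_apply, Pi.one_apply, mul_one, ENNReal.one_rpow, lintegral_const,
    one_mul] at holder
  calc (∫⁻ a, f a ∂μ) ^ q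
      ≤ ((∫⁻ a, f a ^ q ∂μ) ^ (1 / q) * μ univ ^ (1 / (q / (q - 1)))) ^ q := by gcongr
    _ = μ univ ^ (q - 1) * ∫⁻ a, f a ^ q ∂μ := by
      rw [ENNReal.mul_rpow_of_nonneg _ _ hq0.le, ← ENNReal.rpow_mul, ← ENNReal.rpow_mul,
        one_div_mul_cancel hq0.ne', ENNReal.rpow_one, mul_comm]
      congr 2
      field_simp

lemma ofReal_div_abs_rpow {w : ℝ} (A r : ℝ) (hw : w ≠ 0) :
    ENNReal.ofReal (A / |w| ^ r) = ENNReal.ofReal |w| ^ (-r) * ENNReal.ofReal A := by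
  rw [div_eq_inv_mul, ← Real.rpow_neg (abs_nonneg w), ENNReal.ofReal_mul (by positivity),
    ENNReal.ofReal_rpow_of_pos (abs_pos.2 hw)]

section TaylorRemainder

variable {E : Type*} [NormedAddCommGroup E] [NormedSpace ℝ E]

lemma measurable_taylor_remainder_quotient {γ : ℝ → E} (hγ : ContDiff ℝ 1 γ) (q : ℝ) :
    Measurable fun p : ℝ × ℝ =>
      ENNReal.ofReal (‖γ (p.1 + p.2) - γ p.1 - p.2 • deriv γ p.1‖ ^ q / |p.2| ^ (2 * q)) := by
  have := hγ.continuous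
  have := hγ.continuous_deriv_one
  have hnum : Continuous fun p : ℝ × ℝ => ‖γ (p.1 + p.2) - γ p.1 - p.2 • deriv γ p.1‖ := by
    fun_prop
  exact ((hnum.measurable.pow_const q).div (measurable_snd.abs.pow_const _)).ennreal_ofReal

variable [CompleteSpace E]

lemma norm_sub_sub_smul_deriv_le {γ : ℝ → E} (hγ : ContDiff ℝ 1 γ) (x w : ℝ) :
    ‖γ (x + w) - γ x - w • deriv γ x‖ ≤ ∫ s in uIoc 0 w, ‖deriv γ (x + s) - deriv γ x‖ := by
  have hγ' := hγ.continuous_deriv_one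
  have hftc : ∫ s in (0 : ℝ)..w, deriv γ (x + s) = γ (x + w) - γ x := by
    rw [intervalIntegral.integral_comp_add_left, add_zero,
      intervalIntegral.integral_deriv_eq_sub
        (fun t _ => (hγ.differentiable one_ne_zero).differentiableAt)
        (hγ'.intervalIntegrable _ _)]
  have hrem :
      γ (x + w) - γ x - w • deriv γ x = ∫ s in (0 : ℝ)..w, (deriv γ (x + s) - deriv γ x) := by
    rw [intervalIntegral.integral_sub
      ((by fun_prop : Continuous fun s => deriv γ (x + s)).intervalIntegrable _ _)
      intervalIntegrable_const, hftc, intervalIntegral.integral_const, sub_zero]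
  rw [hrem]
  exact intervalIntegral.norm_integral_le_integral_norm_uIoc

lemma ofReal_norm_sub_sub_smul_deriv_rpow_le {γ : ℝ → E} (hγ : ContDiff ℝ 1 γ) {q : ℝ} (hq : 1 < q)
    (x w : ℝ) :
    ENNReal.ofReal (‖γ (x + w) - γ x - w • deriv γ x‖ ^ q)
      ≤ ENNReal.ofReal |w| ^ (q - 1) *
        ∫⁻ s in uIoc 0 w, ENNReal.ofReal (‖deriv γ (x + s) - deriv γ x‖ ^ q) := by
  have hq0 : 0 ≤ q := by linarith
  have hg : Continuous fun s => ‖deriv γ (x + s) - deriv γ x‖ := by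
    have := hγ.continuous_deriv_one; fun_prop
  calc ENNReal.ofReal (‖γ (x + w) - γ x - w • deriv γ x‖ ^ q)
      = ENNReal.ofReal ‖γ (x + w) - γ x - w • deriv γ x‖ ^ q :=
        (ENNReal.ofReal_rpow_of_nonneg (norm_nonneg _) hq0).symm
    _ ≤ ENNReal.ofReal (∫ s in uIoc 0 w, ‖deriv γ (x + s) - deriv γ x‖) ^ q := by
        gcongr; exact norm_sub_sub_smul_deriv_le hγ x w
    _ = (∫⁻ s in uIoc 0 w, ENNReal.ofReal ‖deriv γ (x + s) - deriv γ x‖) ^ q := by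
        rw [ofReal_integral_eq_lintegral_ofReal hg.integrableOn_uIoc
          (ae_of_all _ fun _ => norm_nonneg _)]
    _ ≤ volume (uIoc 0 w) ^ (q - 1) *
          ∫⁻ s in uIoc 0 w, ENNReal.ofReal ‖deriv γ (x + s) - deriv γ x‖ ^ q := by
        simpa only [Measure.restrict_apply_univ] using
          lintegral_rpow_le_measure_univ_mul (volume.restrict (uIoc 0 w)) hq
            hg.measurable.ennreal_ofReal.aemeasurable
    _ = _ := by
        rw [Real.volume_uIoc, sub_zero]
        congr 1
        exact lintegral_congr fun s => ENNReal.ofReal_rpow_of_nonneg (norm_nonneg _) hq0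

lemma lintegral_taylor_remainder_le {γ : ℝ → E} (hγ : ContDiff ℝ 1 γ) {q a : ℝ} (hq : 1 < q)
    (ha : 0 ≤ a) (x : ℝ) :
    ∫⁻ w in Icc (-a) a, ENNReal.ofReal (‖γ (x + w) - γ x - w • deriv γ x‖ ^ q / |w| ^ (2 * q))
      ≤ ENNReal.ofReal (1 / q) *
        ∫⁻ w in Icc (-a) a, ENNReal.ofReal (‖deriv γ (x + w) - deriv γ x‖ ^ q / |w| ^ q) := by
  have hq0 : 0 < q := by linarith
  set F : ℝ → ℝ≥0∞ := fun s => ENNReal.ofReal (‖deriv γ (x + s) - deriv γ x‖ ^ q)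
  have hF : Measurable F := by
    have := hγ.continuous_deriv_one
    exact ((by fun_prop : Continuous fun s => ‖deriv γ (x + s) - deriv γ x‖).measurable.pow_const
      q).ennreal_ofReal
  have hpt : ∀ w, ENNReal.ofReal (‖γ (x + w) - γ x - w • deriv γ x‖ ^ q / |w| ^ (2 * q))
      ≤ ENNReal.ofReal |w| ^ (-q - 1) * ∫⁻ s in uIoc 0 w, F s := by
    intro w
    rcases eq_or_ne w 0 with rfl | hw
    · simp [Real.zero_rpow (by positivity : 2 * q ≠ 0)]
    have hw' : ENNReal.ofReal |w| ≠ 0 := (ENNReal.ofReal_pos.2 (abs_pos.2 hw)).ne'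
    calc _ = ENNReal.ofReal |w| ^ (-(2 * q)) *
            ENNReal.ofReal (‖γ (x + w) - γ x - w • deriv γ x‖ ^ q) := ofReal_div_abs_rpow _ _ hw
      _ ≤ ENNReal.ofReal |w| ^ (-(2 * q)) *
            (ENNReal.ofReal |w| ^ (q - 1) * ∫⁻ s in uIoc 0 w, F s) := by
          gcongr
          exact ofReal_norm_sub_sub_smul_deriv_rpow_le hγ hq x w
      _ = _ := by
          rw [← mul_assoc, ← ENNReal.rpow_add _ _ hw' ENNReal.ofReal_ne_top]
          ring_nf
  calc _ ≤ ∫⁻ w in Icc (-a) a, ENNReal.ofReal |w| ^ (-q - 1) * ∫⁻ s in uIoc 0 w, F s :=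
        lintegral_mono hpt
    _ ≤ ENNReal.ofReal (1 / q) * ∫⁻ s in Icc (-a) a, ENNReal.ofReal |s| ^ (-q) * F s :=
        hardy_lintegral_Icc_le hq0 ha hF
    _ = _ := by
        refine congrArg _ (setLIntegral_congr_fun_ae measurableSet_Icc ?_)
        filter_upwards [Measure.ae_ne volume 0] with s hs _
        rw [ofReal_div_abs_rpow _ _ hs]

end TaylorRemainder

lemma lintegral_taylor_remainder_le_gagliardo {γ : ℝ → EuclideanSpace ℝ (Fin 2)}
    (hγ : ContDiff ℝ 1 γ) {q : ℝ} (hq : 1 < q) :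
    ∫⁻ p in Ioc (0 : ℝ) 1 ×ˢ Icc (-(1/2) : ℝ) (1/2),
        ENNReal.ofReal (‖γ (p.1 + p.2) - γ p.1 - p.2 • deriv γ p.1‖ ^ q / |p.2| ^ (2 * q))
      ≤ ENNReal.ofReal (1 / q) * gagliardo q (deriv γ) := by
  rw [Measure.volume_eq_prod, ← Measure.prod_restrict,
    lintegral_prod _ (measurable_taylor_remainder_quotient hγ q).aemeasurable, gagliardo,
    ← lintegral_const_mul' _ _ ENNReal.ofReal_ne_top]
  exact lintegral_mono fun x => lintegral_taylor_remainder_le hγ hq (by norm_num) x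

lemma infDist_tangentLine_le (γ : ℝ → EuclideanSpace ℝ (Fin 2)) (x w : ℝ) :
    Metric.infDist (γ (x + w)) (tangentLine γ x) ≤ ‖γ (x + w) - γ x - w • deriv γ x‖ := by
  rw [sub_sub, ← dist_eq_norm]
  exact Metric.infDist_le_dist_of_mem ⟨w, rfl⟩

lemma tangentPoint_integrand_le {q c : ℝ} (hq : 0 < q) (γ : ℝ → EuclideanSpace ℝ (Fin 2))
    {x w : ℝ} (hbil : |w| ≤ c * ‖γ (x + w) - γ x‖) :
    (2 * Metric.infDist (γ (x + w)) (tangentLine γ x) / ‖γ (x + w) - γ x‖ ^ 2) ^ q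
      ≤ (2 * c ^ 2) ^ q * (‖γ (x + w) - γ x - w • deriv γ x‖ ^ q / |w| ^ (2 * q)) := by
  set d := Metric.infDist (γ (x + w)) (tangentLine γ x)
  set r := ‖γ (x + w) - γ x‖
  set R := ‖γ (x + w) - γ x - w • deriv γ x‖
  by_cases hr : r = 0
  · rw [hr, zero_pow two_ne_zero, div_zero, Real.zero_rpow hq.ne']
    positivity
  have hw : w ≠ 0 := by
    rintro rfl
    simp [r] at hr
  have hdR : d ≤ R := infDist_tangentLine_le γ x w
  have hwr : w ^ 2 ≤ c ^ 2 * r ^ 2 := by nlinarith [abs_nonneg w, sq_abs w]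
  have hbase : 2 * d / r ^ 2 ≤ 2 * c ^ 2 * R / w ^ 2 := by
    rw [div_le_div_iff₀ (by positivity) (by positivity)]
    nlinarith [mul_le_mul_of_nonneg_right hdR (sq_nonneg w),
      mul_le_mul_of_nonneg_left hwr (norm_nonneg _ : 0 ≤ R)]
  calc (2 * d / r ^ 2) ^ q
      ≤ (2 * c ^ 2 * R / w ^ 2) ^ q :=
        Real.rpow_le_rpow (div_nonneg (mul_nonneg zero_le_two Metric.infDist_nonneg) (sq_nonneg r))
          hbase hq.le
    _ = (2 * c ^ 2) ^ q * (R ^ q / |w| ^ (2 * q)) := by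
        rw [← sq_abs w, mul_div_assoc, Real.mul_rpow (by positivity) (by positivity),
          Real.div_rpow (norm_nonneg _) (by positivity), ← Real.rpow_natCast |w| 2,
          ← Real.rpow_mul (abs_nonneg w)]
        push_cast
        rfl

theorem stmt4_general (q : ℝ) (hq : 2 < q) (γ : ℝ → EuclideanSpace ℝ (Fin 2))
    (hC1 : ContDiff ℝ 1 γ)
    (hsob : gagliardo q (deriv γ) < ⊤)
    (D : Set (ℝ × ℝ)) (hD : D ⊆ Ioc (0 : ℝ) 1 ×ˢ Icc (-(1/2) : ℝ) (1/2))
    (c : ℝ)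
    (hbil : ∀ p ∈ D, |p.2| ≤ c * ‖γ (p.1 + p.2) - γ p.1‖) :
    tpE q γ D ≤ ENNReal.ofReal ((2 * c ^ 2) ^ q * (1 / q)) * gagliardo q (deriv γ) ∧
      tpE q γ D < ⊤ := by
  set G : ℝ × ℝ → ℝ≥0∞ := fun p =>
    ENNReal.ofReal (‖γ (p.1 + p.2) - γ p.1 - p.2 • deriv γ p.1‖ ^ q / |p.2| ^ (2 * q))
  have hG : Measurable G := measurable_taylor_remainder_quotient hC1 q
  have hpt : ∀ p ∈ D, ENNReal.ofReal ((2 * Metric.infDist (γ (p.1 + p.2)) (tangentLine γ p.1) /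
      ‖γ (p.1 + p.2) - γ p.1‖ ^ 2) ^ q) ≤ ENNReal.ofReal ((2 * c ^ 2) ^ q) * G p := fun p hp => by
    rw [← ENNReal.ofReal_mul (by positivity)]
    exact ENNReal.ofReal_le_ofReal (tangentPoint_integrand_le (by linarith) γ (hbil p hp))
  have hbound : tpE q γ D ≤ ENNReal.ofReal ((2 * c ^ 2) ^ q * (1 / q)) * gagliardo q (deriv γ) :=
    calc tpE q γ D
        ≤ ∫⁻ p in D, ENNReal.ofReal ((2 * c ^ 2) ^ q) * G p := setLIntegral_mono (by fun_prop) hpt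
      _ ≤ ∫⁻ p in Ioc (0 : ℝ) 1 ×ˢ Icc (-(1/2) : ℝ) (1/2), ENNReal.ofReal ((2 * c ^ 2) ^ q) * G p :=
          lintegral_mono_set hD
      _ = ENNReal.ofReal ((2 * c ^ 2) ^ q) * ∫⁻ p in Ioc (0 : ℝ) 1 ×ˢ Icc (-(1/2) : ℝ) (1/2), G p :=
          lintegral_const_mul' _ _ ENNReal.ofReal_ne_top
      _ ≤ ENNReal.ofReal ((2 * c ^ 2) ^ q) * (ENNReal.ofReal (1 / q) * gagliardo q (deriv γ)) := by
          gcongr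
          exact lintegral_taylor_remainder_le_gagliardo hC1 (by linarith)
      _ = ENNReal.ofReal ((2 * c ^ 2) ^ q * (1 / q)) * gagliardo q (deriv γ) := by
          rw [← mul_assoc, ← ENNReal.ofReal_mul (by positivity)]
  exact ⟨hbound, hbound.trans_lt (ENNReal.mul_lt_top ENNReal.ofReal_lt_top hsob)⟩

theorem stmt4 (q : ℝ) (hq : 2 < q) (γ : ℝ → EuclideanSpace ℝ (Fin 2))
    (hper : ∀ t, γ (t + 1) = γ t) (hC1 : ContDiff ℝ 1 γ)
    (harc : ∀ t, ‖deriv γ t‖ = 1)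
    (hsob : gagliardo q (deriv γ) < ⊤)
    (D : Set (ℝ × ℝ)) (hD : D ⊆ Ioc (0 : ℝ) 1 ×ˢ Icc (-(1/2) : ℝ) (1/2))
    (c : ℝ) (hc : 0 < c)
    (hbil : ∀ p ∈ D, |p.2| ≤ c * ‖γ (p.1 + p.2) - γ p.1‖) :
    tpE q γ D ≤ ENNReal.ofReal ((2 * c ^ 2) ^ q * (1 / q)) * gagliardo q (deriv γ) ∧
      tpE q γ D < ⊤ :=
  stmt4_general q hq γ hC1 hsob D hD c hbil
end

section
/- For unit vectors a, b ∈ S¹ ⊂ ℝ², one has ⟨a, b⟩ = 1 - |a - b|²/2. Consequently, for an arclength-parametrized C¹ curve γ with |γ'(t) - γ'(t')| ≤ 1/2 for all parameters t, t' in a subinterval I, and for x, x+w ∈ I, the quantity N := ⟨Δγ, γ'(x+w) - γ'(x)⟩² + 2⟨Δγ, γ'(x+w)⟩⟨Δγ, γ'(x)⟩(1 - ⟨γ'(x+w), γ'(x)⟩), where Δγ = γ(x+w) - γ(x), satisfies N ≥ (7/8)² w² |γ'(x+w) - γ'(x)|². -/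
open Set
open scoped RealInnerProductSpace

/-!
For unit vectors `2 (1 - ⟪v, u⟫) = ‖v - u‖²`, so with `u = γ'(x)`, `v = γ'(x + w)` and
`Δ = γ(x + w) - γ(x)` the quantity is `⟪Δ, v - u⟫² + ⟪Δ, v⟫ ⟪Δ, u⟫ ‖v - u‖²`. The oscillation
bound gives `⟪γ'(s), u⟫, ⟪γ'(s), v⟫ ≥ 1 - (1/2)² / 2 = 7/8` for every `s` between `x` and `x + w`,
so by the mean value theorem `⟪Δ, u⟫` and `⟪Δ, v⟫` have the sign of `w` and modulus at least
`7/8 |w|`; hence `⟪Δ, v⟫ ⟪Δ, u⟫ ≥ (7/8)² w²`.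
-/

section

variable {E : Type*} [NormedAddCommGroup E] [InnerProductSpace ℝ E]

lemma real_inner_eq_one_sub_norm_sub_sq_div_two {a b : E} (ha : ‖a‖ = 1) (hb : ‖b‖ = 1) :
    ⟪a, b⟫ = 1 - ‖a - b‖ ^ 2 / 2 := by
  rw [norm_sub_sq_real, ha, hb]
  ring

lemma one_sub_sq_div_two_le_real_inner {a b : E} {δ : ℝ} (ha : ‖a‖ = 1) (hb : ‖b‖ = 1)
    (hab : ‖a - b‖ ≤ δ) : 1 - δ ^ 2 / 2 ≤ ⟪a, b⟫ := by
  rw [real_inner_eq_one_sub_norm_sub_sq_div_two ha hb]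
  have := pow_le_pow_left₀ (norm_nonneg _) hab 2
  linarith

variable {γ : ℝ → E} {I : Set ℝ} {u v : E} {c : ℝ}

lemma Set.OrdConnected.mul_sub_le_inner_sub (hγ : Differentiable ℝ γ) (hI : I.OrdConnected)
    (hc : ∀ s ∈ I, c ≤ ⟪deriv γ s, u⟫) {x y : ℝ} (hx : x ∈ I) (hy : y ∈ I) (hxy : x ≤ y) :
    c * (y - x) ≤ ⟪γ y - γ x, u⟫ := by
  have hderiv : ∀ s, HasDerivAt (fun t => ⟪γ t, u⟫) ⟪deriv γ s, u⟫ s := fun s => by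
    simpa using (hγ s).hasDerivAt.inner ℝ (hasDerivAt_const s u)
  have hdiff : Differentiable ℝ fun t => ⟪γ t, u⟫ := fun s => (hderiv s).differentiableAt
  rw [inner_sub_left]
  refine hI.convex.mul_sub_le_image_sub_of_le_deriv hdiff.continuous.continuousOn
    hdiff.differentiableOn (fun s hs => ?_) x hx y hy hxy
  rw [(hderiv s).deriv]
  exact hc s (interior_subset hs)

lemma Set.OrdConnected.sq_mul_sq_le_inner_mul_inner (hγ : Differentiable ℝ γ)
    (hI : I.OrdConnected) (hc₀ : 0 ≤ c) (hu : ∀ s ∈ I, c ≤ ⟪deriv γ s, u⟫)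
    (hv : ∀ s ∈ I, c ≤ ⟪deriv γ s, v⟫) {x y : ℝ} (hx : x ∈ I) (hy : y ∈ I) :
    c ^ 2 * (y - x) ^ 2 ≤ ⟪γ y - γ x, u⟫ * ⟪γ y - γ x, v⟫ := by
  wlog hxy : x ≤ y generalizing x y
  · have := this hy hx (le_of_not_ge hxy)
    rwa [← neg_sub (γ y), inner_neg_left, inner_neg_left, neg_mul_neg, ← neg_sub y, neg_sq]
      at this
  have hcu := hI.mul_sub_le_inner_sub hγ hu hx hy hxy
  have hcv := hI.mul_sub_le_inner_sub hγ hv hx hy hxy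
  have h₀ : 0 ≤ c * (y - x) := mul_nonneg hc₀ (sub_nonneg.2 hxy)
  calc c ^ 2 * (y - x) ^ 2 = (c * (y - x)) * (c * (y - x)) := by ring
    _ ≤ ⟪γ y - γ x, u⟫ * ⟪γ y - γ x, v⟫ := mul_le_mul hcu hcv h₀ (h₀.trans hcu)

end

theorem stmt5 :
    (∀ a b : EuclideanSpace ℝ (Fin 2), ‖a‖ = 1 → ‖b‖ = 1 →
      ⟪a, b⟫ = 1 - ‖a - b‖ ^ 2 / 2) ∧
    ∀ (γ : ℝ → EuclideanSpace ℝ (Fin 2)), ContDiff ℝ 1 γ → (∀ t, ‖deriv γ t‖ = 1) →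
      ∀ I : Set ℝ, I.OrdConnected →
      (∀ t ∈ I, ∀ t' ∈ I, ‖deriv γ t - deriv γ t'‖ ≤ 1/2) →
      ∀ x w : ℝ, x ∈ I → x + w ∈ I →
        ⟪γ (x + w) - γ x, deriv γ (x + w) - deriv γ x⟫ ^ 2 +
            2 * ⟪γ (x + w) - γ x, deriv γ (x + w)⟫ * ⟪γ (x + w) - γ x, deriv γ x⟫ *
              (1 - ⟪deriv γ (x + w), deriv γ x⟫) ≥
          (7/8) ^ 2 * w ^ 2 * ‖deriv γ (x + w) - deriv γ x‖ ^ 2 := by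
  refine ⟨fun a b ha hb => real_inner_eq_one_sub_norm_sub_sq_div_two ha hb, ?_⟩
  intro γ hγ hunit I hI hosc x w hx hxw
  have hcone : ∀ t ∈ I, ∀ s ∈ I, 7/8 ≤ ⟪deriv γ s, deriv γ t⟫ := fun t ht s hs => by
    have := one_sub_sq_div_two_le_real_inner (hunit s) (hunit t) (hosc s hs t ht)
    norm_num at this
    exact this
  have hprod := hI.sq_mul_sq_le_inner_mul_inner (hγ.differentiable one_ne_zero) (by norm_num)
    (hcone _ hxw) (hcone _ hx) hx hxw
  rw [add_sub_cancel_left] at hprod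
  rw [real_inner_eq_one_sub_norm_sub_sq_div_two (hunit _) (hunit _)]
  linarith [mul_le_mul_of_nonneg_right hprod (sq_nonneg ‖deriv γ (x + w) - deriv γ x‖),
    sq_nonneg ⟪γ (x + w) - γ x, deriv γ (x + w) - deriv γ x⟫]
end

section
/- Let α ∈ (0, π/2] and define f_α(z) = (z - cot α)/(z² + 1) for z ∈ [cot α, cot(α/2)]. Then f_α attains its maximum on this interval at z₂ = cot(α/2), with maximum value f_α(z₂) = (1/2) tan(α/2), and moreover 0 ≤ 4 cot α · f_α(z) ≤ 2 cos α / (1 + cos α) ≤ 1 for all z in the interval. -/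
/-!
The point `b = cot (α/2)` is a root of `z² - 2 cot α · z - 1`, the critical-point equation of
`f(z) = (z - a)/(z² + 1)` with `a = cot α`; for any such root `b > 0` one has
`(b - a)(z² + 1) - (z - a)(b² + 1) = (b - a)(z - b)² ≥ 0`, so `b` is a global maximum and
`f(b) = 1/(2b)`.
In the half-angle variable `t = tan (α/2) ∈ (0, 1]` all remaining quantities are rational in `t`:
`cot α = (1 - t²)/(2t)`, `cot (α/2) = 1/t`, `cos α = (1 - t²)/(1 + t²)`, and both
`4 cot α · f(cot (α/2))` and `2 cos α/(1 + cos α)` equal `1 - t²`.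
-/

open Real Set

theorem sub_div_sq_add_one_eq_one_div_two_mul {a b : ℝ} (hb : b ^ 2 = 2 * a * b + 1) :
    (b - a) / (b ^ 2 + 1) = 1 / (2 * b) := by
  have hb0 : b ≠ 0 := by rintro rfl; norm_num at hb
  rw [div_eq_div_iff (by positivity) (by positivity)]
  linear_combination hb

theorem isMaxOn_sub_div_sq_add_one {a b : ℝ} (hb : b ^ 2 = 2 * a * b + 1) (hb0 : 0 < b) :
    IsMaxOn (fun z => (z - a) / (z ^ 2 + 1)) univ b := by
  intro z _
  have hba : 0 < b - a := by nlinarith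
  have key : (z - a) * (b ^ 2 + 1) + (b - a) * (z - b) ^ 2 = (b - a) * (z ^ 2 + 1) := by
    linear_combination (b - z) * hb
  show (z - a) / (z ^ 2 + 1) ≤ (b - a) / (b ^ 2 + 1)
  rw [div_le_div_iff₀ (by positivity) (by positivity)]
  nlinarith [mul_nonneg hba.le (sq_nonneg (z - b))]

theorem Real.cot_eq_one_div_tan (x : ℝ) : cot x = 1 / tan x := by
  rw [cot_eq_cos_div_sin, tan_eq_sin_div_cos, one_div_div]

theorem Real.cot_eq_one_sub_tan_half_sq_div_two_mul_tan_half (x : ℝ) :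
    cot x = (1 - tan (x / 2) ^ 2) / (2 * tan (x / 2)) := by
  rw [cot_eq_one_div_tan, tan_eq_one_sub_tan_half_sq_div_one_add_tan_half_sq, one_div_div]

theorem stmt11 (α : ℝ) (hα : α ∈ Ioc 0 (π / 2)) :
    IsMaxOn (fun z => (z - cot α) / (z ^ 2 + 1)) (Icc (cot α) (cot (α / 2))) (cot (α / 2)) ∧
    (cot (α / 2) - cot α) / (cot (α / 2) ^ 2 + 1) = (1/2) * tan (α / 2) ∧
    ∀ z ∈ Icc (cot α) (cot (α / 2)),
      0 ≤ 4 * cot α * ((z - cot α) / (z ^ 2 + 1)) ∧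
      4 * cot α * ((z - cot α) / (z ^ 2 + 1)) ≤ 2 * cos α / (1 + cos α) ∧
      2 * cos α / (1 + cos α) ≤ 1 := by
  obtain ⟨hα0, hαπ⟩ := hα
  have hcos : 0 ≤ cos α := cos_nonneg_of_neg_pi_div_two_le_of_le (by linarith [pi_pos]) hαπ
  have hcos_eq := cos_eq_two_mul_tan_half_div_one_sub_tan_half_sq α (by linarith)
  have hcot_half : cot (α / 2) = 1 / tan (α / 2) := cot_eq_one_div_tan _
  have hcot := cot_eq_one_sub_tan_half_sq_div_two_mul_tan_half α
  set t := tan (α / 2)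
  have ht : 0 < t := tan_pos_of_pos_of_lt_pi_div_two (by linarith) (by linarith [pi_pos])
  have ht1 : 0 ≤ 1 - t ^ 2 := by
    have : 1 - t ^ 2 = cos α * (1 + t ^ 2) := by rw [hcos_eq]; field_simp
    rw [this]; positivity
  have hcrit : cot (α / 2) ^ 2 = 2 * cot α * cot (α / 2) + 1 := by
    rw [hcot_half, hcot]; field_simp; ring
  have hmax_val : (cot (α / 2) - cot α) / (cot (α / 2) ^ 2 + 1) = (1/2) * t := by
    rw [sub_div_sq_add_one_eq_one_div_two_mul hcrit, hcot_half]; field_simp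
  have hmax := (isMaxOn_sub_div_sq_add_one hcrit (by rw [hcot_half]; positivity)).on_subset
    (subset_univ (Icc (cot α) (cot (α / 2))))
  have hcot_nonneg : 0 ≤ cot α := by rw [hcot]; positivity
  have hbound : 2 * cos α / (1 + cos α) = 4 * cot α * ((1/2) * t) := by
    rw [hcos_eq, hcot]; field_simp; ring
  refine ⟨hmax, hmax_val, fun z hz => ⟨?_, ?_, ?_⟩⟩
  · have : 0 ≤ z - cot α := sub_nonneg.2 hz.1
    positivity
  · rw [hbound, ← hmax_val]
    exact mul_le_mul_of_nonneg_left (hmax hz) (by positivity)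
  · rw [div_le_one (by positivity)]
    linarith [cos_le_one α]
end
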